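/- arXiv:2207.09198 — 8 statements merged into one kernel-verified Lean document; each statement's English description precedes it below -/
import Mathlib

section
/- For a subset M of a finite database D, M is contained in every repair of D if and only if, for every weakly consistent subset D' of D, the set D' ∪ M is weakly consistent with D. -/
open Classical in
lemma extend_to_repair {F : Type*} [DecidableEq F] (D : Finset F) (C : Finset F → Prop)
    (S : Finset F) (hSD : S ⊆ D) (hCS : C S) :
    ∃ R : Finset F, S ⊆ R ∧ R ⊆ D ∧ C R ∧
      ∀ R' : Finset F, R ⊂ R' → R' ⊆ D → ¬ C R' := by
  classical
  set T := D.powerset.filter (fun X => S ⊆ X ∧ C X) with hT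
  have hmem : S ∈ T := by
    simp [hT, Finset.mem_powerset, hSD, hCS]
  obtain ⟨R, hR, hmax⟩ := T.exists_max_image Finset.card ⟨S, hmem⟩
  simp only [hT, Finset.mem_filter, Finset.mem_powerset] at hR
  refine ⟨R, hR.2.1, hR.1, hR.2.2, ?_⟩
  intro R' hRR' hR'D hCR'
  have hR'T : R' ∈ T := by
    simp only [hT, Finset.mem_filter, Finset.mem_powerset]
    exact ⟨hR'D, hR.2.1.trans hRR'.subset, hCR'⟩
  have := hmax R' hR'T
  have := Finset.card_lt_card hRR'
  omega

theorem mem_all_repairs_iff {F : Type*} [DecidableEq F] (D : Finset F) (C : Finset F → Prop)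
    (hC : C ∅) (M : Finset F) (hM : M ⊆ D) :
    (∀ R : Finset F,
        (R ⊆ D ∧ C R ∧ ∀ R' : Finset F, R ⊂ R' → R' ⊆ D → ¬ C R') → M ⊆ R) ↔
      (∀ D' : Finset F, D' ⊆ D →
        (∃ D'' : Finset F, D' ⊆ D'' ∧ D'' ⊆ D ∧ C D'') →
        (∃ D'' : Finset F, D' ∪ M ⊆ D'' ∧ D'' ⊆ D ∧ C D'')) := by
  constructor
  · rintro h D' hD'D ⟨D'', hsub, hD''D, hCD''⟩
    obtain ⟨R, hDR, hRD, hCR, hmax⟩ := extend_to_repair D C D'' hD''D hCD''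
    have hMR : M ⊆ R := h R ⟨hRD, hCR, hmax⟩
    exact ⟨R, Finset.union_subset (hsub.trans hDR) hMR, hRD, hCR⟩
  · rintro h R ⟨hRD, hCR, hmax⟩
    obtain ⟨D'', hsub, hD''D, hCD''⟩ := h R hRD ⟨R, subset_rfl, hRD, hCR⟩
    have hRsub : R ⊆ D'' := (Finset.subset_union_left).trans hsub
    have : R = D'' := by
      by_contra hne
      exact hmax D'' (hRsub.ssubset_of_ne hne) hD''D hCD''
    exact this ▸ (Finset.subset_union_right).trans hsub
end

section
/- In the linear dependency model, a subset D' of a finite database D is weakly consistent with D if and only if, for every α ∈ D', the singleton {α} is weakly consistent with D. -/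
theorem linear_weaklyConsistent_iff_singletons {F : Type*} [DecidableEq F]
    (Sig : Set (F × Set (Finset F))) (D : Finset F) (D' : Finset F) (hD' : D' ⊆ D) :
    (∃ D'' : Finset F, D' ⊆ D'' ∧ D'' ⊆ D ∧
        ∀ p ∈ Sig, p.1 ∈ (↑D'' : Set F) → ∃ h ∈ p.2, ↑h ⊆ (↑D'' : Set F)) ↔
      (∀ α ∈ D', ∃ D'' : Finset F, {α} ⊆ D'' ∧ D'' ⊆ D ∧
        ∀ p ∈ Sig, p.1 ∈ (↑D'' : Set F) → ∃ h ∈ p.2, ↑h ⊆ (↑D'' : Set F)) := by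
  constructor
  · rintro ⟨E, hsub, hED, hcons⟩ α hα
    exact ⟨E, by simpa using hsub hα, hED, hcons⟩
  · intro h
    choose f hf1 hf2 hf3 using h
    classical
    refine ⟨D'.attach.biUnion (fun a => f a.1 a.2), ?_, ?_, ?_⟩
    · intro x hx
      simp only [Finset.mem_biUnion, Finset.mem_attach, true_and, Subtype.exists]
      exact ⟨x, hx, hf1 x hx (Finset.mem_singleton_self x)⟩
    · intro x hx
      simp only [Finset.mem_biUnion, Finset.mem_attach, true_and, Subtype.exists] at hx
      obtain ⟨a, ha, hxa⟩ := hx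
      exact hf2 a ha hxa
    · intro p hp hp1
      simp only [Finset.coe_biUnion, Set.mem_iUnion, Finset.mem_coe] at hp1
      obtain ⟨a, -, hpa⟩ := hp1
      obtain ⟨hset, hh1, hh2⟩ := hf3 a.1 a.2 p hp hpa
      refine ⟨hset, hh1, hh2.trans ?_⟩
      intro x hx
      simp only [Finset.coe_biUnion, Set.mem_iUnion]
      exact ⟨a, Finset.mem_attach _ _, hx⟩
end

section
/- In the linear dependency model, the set U = {α ∈ D | {α} is weakly consistent with D} is the unique repair of the finite database D. -/
theorem linear_unique_repair {F : Type*} [DecidableEq F]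
    (Sig : Set (F × Set (Finset F))) (D : Finset F)
    (U : Finset F)
    (hU : U = @Finset.filter F
        (fun α => ∃ D'' : Finset F, {α} ⊆ D'' ∧ D'' ⊆ D ∧
          ∀ p ∈ Sig, p.1 ∈ (↑D'' : Set F) → ∃ h ∈ p.2, ↑h ⊆ (↑D'' : Set F))
        (fun _ => Classical.propDecidable _) D) :
    (U ⊆ D ∧ (∀ p ∈ Sig, p.1 ∈ (↑U : Set F) → ∃ h ∈ p.2, ↑h ⊆ (↑U : Set F)) ∧
      ∀ R' : Finset F, U ⊂ R' → R' ⊆ D →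
        ¬ (∀ p ∈ Sig, p.1 ∈ (↑R' : Set F) → ∃ h ∈ p.2, ↑h ⊆ (↑R' : Set F))) ∧
    (∀ R : Finset F,
      (R ⊆ D ∧ (∀ p ∈ Sig, p.1 ∈ (↑R : Set F) → ∃ h ∈ p.2, ↑h ⊆ (↑R : Set F)) ∧
        ∀ R' : Finset F, R ⊂ R' → R' ⊆ D →
          ¬ (∀ p ∈ Sig, p.1 ∈ (↑R' : Set F) → ∃ h ∈ p.2, ↑h ⊆ (↑R' : Set F))) → R = U) := by
  -- membership characterization
  have hmem : ∀ x : F, x ∈ U ↔ x ∈ D ∧ ∃ D'' : Finset F, ({x} : Finset F) ⊆ D'' ∧ D'' ⊆ D ∧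
      ∀ p ∈ Sig, p.1 ∈ (↑D'' : Set F) → ∃ h ∈ p.2, ↑h ⊆ (↑D'' : Set F) := by
    intro x
    classical
    rw [hU]
    simp [Finset.mem_filter]
  -- any element of a consistent subset of D lies in U
  have key : ∀ (S : Finset F), S ⊆ D →
      (∀ p ∈ Sig, p.1 ∈ (↑S : Set F) → ∃ h ∈ p.2, ↑h ⊆ (↑S : Set F)) →
      S ⊆ U := by
    intro S hSD hScons x hx
    exact (hmem x).2 ⟨hSD hx, S, Finset.singleton_subset_iff.2 hx, hSD, hScons⟩
  have hUD : U ⊆ D := by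
    intro x hx; exact ((hmem x).1 hx).1
  have hUcons : ∀ p ∈ Sig, p.1 ∈ (↑U : Set F) → ∃ h ∈ p.2, ↑h ⊆ (↑U : Set F) := by
    intro p hp hpU
    obtain ⟨_, D'', hxD'', hD''D, hD''cons⟩ := (hmem p.1).1 hpU
    obtain ⟨h, hh, hsub⟩ := hD''cons p hp (Finset.singleton_subset_iff.1 hxD'')
    exact ⟨h, hh, hsub.trans (by exact_mod_cast key D'' hD''D hD''cons)⟩
  refine ⟨⟨hUD, hUcons, ?_⟩, ?_⟩
  · intro R' hUR' hR'D hR'cons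
    exact hUR'.not_subset (key R' hR'D hR'cons)
  · intro R ⟨hRD, hRcons, hRmax⟩
    have hRU : R ⊆ U := key R hRD hRcons
    by_contra hne
    exact hRmax U (hRU.ssubset_of_ne hne) hUD hUcons
end

section
/- In the linear dependency model, where a Boolean query Q is given by a set 𝓜 of images (finite subsets of D) and a set S satisfies Q iff some M ∈ 𝓜 satisfies ↑M ⊆ S, the query Q is satisfied by every repair of D if and only if there exists an image M ∈ 𝓜 such that for every α ∈ M the singleton {α} is weakly consistent with D. -/
theorem linear_allRep_query_iff {F : Type*} [DecidableEq F]
    (Sig : Set (F × Set (Finset F))) (D : Finset F)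
    (Ms : Set (Finset F)) (hMs : ∀ M ∈ Ms, M ⊆ D) :
    (∀ R : Finset F,
        (R ⊆ D ∧ (∀ p ∈ Sig, p.1 ∈ (↑R : Set F) → ∃ h ∈ p.2, ↑h ⊆ (↑R : Set F)) ∧
          ∀ R' : Finset F, R ⊂ R' → R' ⊆ D →
            ¬ (∀ p ∈ Sig, p.1 ∈ (↑R' : Set F) → ∃ h ∈ p.2, ↑h ⊆ (↑R' : Set F))) →
        ∃ M ∈ Ms, M ⊆ R) ↔
      (∃ M ∈ Ms, ∀ α ∈ M, ∃ D'' : Finset F, {α} ⊆ D'' ∧ D'' ⊆ D ∧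
        ∀ p ∈ Sig, p.1 ∈ (↑D'' : Set F) → ∃ h ∈ p.2, ↑h ⊆ (↑D'' : Set F)) := by
  classical
  set Cons : Finset F → Prop :=
    fun S => ∀ p ∈ Sig, p.1 ∈ (↑S : Set F) → ∃ h ∈ p.2, ↑h ⊆ (↑S : Set F) with hConsDef
  constructor
  · intro hAll
    set R0 : Finset F :=
      D.filter (fun α => ∃ D'' : Finset F, α ∈ D'' ∧ D'' ⊆ D ∧ Cons D'') with hR0
    have hmem : ∀ α, α ∈ R0 ↔ α ∈ D ∧ ∃ D'' : Finset F, α ∈ D'' ∧ D'' ⊆ D ∧ Cons D'' := by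
      intro α; simp [hR0]
    have hR0D : R0 ⊆ D := Finset.filter_subset _ _
    have hR0cons : Cons R0 := by
      intro p hp hp1
      obtain ⟨hpd, D'', hmemD, hsub, hc⟩ := (hmem p.1).1 (Finset.mem_coe.mp hp1)
      obtain ⟨h, hh, hhsub⟩ := hc p hp (Finset.mem_coe.mpr hmemD)
      refine ⟨h, hh, fun x hx => Finset.mem_coe.mpr ?_⟩
      exact (hmem x).2 ⟨hsub (Finset.mem_coe.mp (hhsub hx)),
        D'', Finset.mem_coe.mp (hhsub hx), hsub, hc⟩
    have hmax : ∀ R' : Finset F, R0 ⊂ R' → R' ⊆ D → ¬ Cons R' := by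
      intro R' hss hR'D hc
      have : R' ⊆ R0 := fun α hα => (hmem α).2 ⟨hR'D hα, R', hα, hR'D, hc⟩
      exact hss.ne (Finset.Subset.antisymm this hss.subset).symm
    obtain ⟨M, hM, hMR⟩ := hAll R0 ⟨hR0D, hR0cons, hmax⟩
    refine ⟨M, hM, fun α hα => ⟨R0, Finset.singleton_subset_iff.mpr (hMR hα), hR0D, hR0cons⟩⟩
  · rintro ⟨M, hM, hWeak⟩ R ⟨hRD, hRcons, hRmax⟩
    refine ⟨M, hM, fun α hα => ?_⟩
    obtain ⟨D'', hαD'', hD''D, hc⟩ := hWeak α hα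
    have hαD'' : α ∈ D'' := Finset.singleton_subset_iff.mp hαD''
    set R' : Finset F := R ∪ D'' with hR'
    have hR'D : R' ⊆ D := Finset.union_subset hRD hD''D
    have hR'cons : Cons R' := by
      intro p hp hp1
      rcases Finset.mem_union.mp (Finset.mem_coe.mp hp1) with h1 | h1
      · obtain ⟨h, hh, hhsub⟩ := hRcons p hp (Finset.mem_coe.mpr h1)
        refine ⟨h, hh, fun x hx => Finset.mem_coe.mpr ?_⟩
        exact Finset.mem_union_left _ (Finset.mem_coe.mp (hhsub hx))
      · obtain ⟨h, hh, hhsub⟩ := hc p hp (Finset.mem_coe.mpr h1)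
        refine ⟨h, hh, fun x hx => Finset.mem_coe.mpr ?_⟩
        exact Finset.mem_union_right _ (Finset.mem_coe.mp (hhsub hx))
    have hsub : R' ⊆ R := by
      by_contra hns
      have hss : R ⊂ R' := Finset.ssubset_iff_subset_ne.mpr
        ⟨Finset.subset_union_left, fun he => hns (le_of_eq he.symm)⟩
      exact hRmax R' hss hR'D hR'cons
    exact hsub (Finset.mem_union_right _ hαD'')
end

section
/- In the forward-deterministic dependency model, a subset D' of D is weakly consistent with D if and only if the forward closure FC(D', D, Σ) is consistent. -/
/-- Forward closure of a set `A` within database `D` under FDET dependencies `Sig`. -/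
def FC {F : Type*} (D : Finset F) (Sig : Set (Finset F × Option (Finset F)))
    (A : Set F) : Set F :=
  ⋂₀ {X : Set F | A ⊆ X ∧ X ⊆ ↑D ∧
      ∀ p ∈ Sig, ∀ h : Finset F, p.2 = some h → ↑p.1 ⊆ X → ↑h ⊆ X}

theorem weaklyConsistent_iff_FC_consistent {F : Type*} (D : Finset F)
    (Sig : Set (Finset F × Option (Finset F)))
    (hSig : ∀ p ∈ Sig, ∀ h : Finset F, p.2 = some h → ↑h ⊆ (↑D : Set F))
    (D' : Finset F) (hD' : D' ⊆ D) :
    (∃ S : Set F, ↑D' ⊆ S ∧ S ⊆ ↑D ∧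
        ∀ p ∈ Sig, ↑p.1 ⊆ S → ∃ h : Finset F, p.2 = some h ∧ ↑h ⊆ S) ↔
      (∀ p ∈ Sig, ↑p.1 ⊆ FC D Sig ↑D' →
        ∃ h : Finset F, p.2 = some h ∧ ↑h ⊆ FC D Sig ↑D') := by
  have hDmem : (↑D : Set F) ∈ {X : Set F | ↑D' ⊆ X ∧ X ⊆ ↑D ∧
      ∀ p ∈ Sig, ∀ h : Finset F, p.2 = some h → ↑p.1 ⊆ X → ↑h ⊆ X} := by
    refine ⟨by exact_mod_cast Finset.coe_subset.mpr hD', le_refl _, ?_⟩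
    intro p hp h hh _
    exact hSig p hp h hh
  have hsubD : FC D Sig ↑D' ⊆ ↑D := Set.sInter_subset_of_mem hDmem
  have hD'FC : ↑D' ⊆ FC D Sig ↑D' := by
    intro x hx
    intro X hX
    exact hX.1 hx
  have hclosed : ∀ p ∈ Sig, ∀ h : Finset F, p.2 = some h →
      ↑p.1 ⊆ FC D Sig ↑D' → ↑h ⊆ FC D Sig ↑D' := by
    intro p hp h hh hsub x hx X hX
    exact hX.2.2 p hp h hh (fun y hy => hsub hy X hX) hx
  constructor
  · rintro ⟨S, hS1, hS2, hS3⟩ p hp hsub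
    have hFCS : FC D Sig ↑D' ⊆ S := by
      apply Set.sInter_subset_of_mem
      refine ⟨hS1, hS2, ?_⟩
      intro q hq h hh hqS
      obtain ⟨h', hh', hh'S⟩ := hS3 q hq hqS
      rw [hh] at hh'; injection hh' with e; subst e
      exact hh'S
    obtain ⟨h, hh, _⟩ := hS3 p hp (hsub.trans hFCS)
    exact ⟨h, hh, hclosed p hp h hh hsub⟩
  · intro hcons
    exact ⟨FC D Sig ↑D', hD'FC, hsubD, hcons⟩
end

section
/- For acyclic dependencies, a subset D' of a finite database D is a repair of D if and only if D' is consistent and, for every α ∈ D \ D', the set D' ∪ {α} is inconsistent. (That is, under acyclicity, one-step maximality suffices.) -/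
theorem acyclic_repair_iff_one_step_maximal {F : Type*} [DecidableEq F]
    (Δ : Set (Finset F × Set (Finset F)))
    (lvl : F → ℕ)
    (hacyc : ∀ δ ∈ Δ, ∀ b ∈ δ.1, ∀ h ∈ δ.2, ∀ x ∈ h, lvl x < lvl b)
    (D : Finset F) (D' : Finset F) (hD' : D' ⊆ D) :
    ((∀ δ ∈ Δ, δ.1 ⊆ D' → ∃ h ∈ δ.2, h ⊆ D') ∧
      ∀ R' : Finset F, D' ⊂ R' → R' ⊆ D →
        ¬ (∀ δ ∈ Δ, δ.1 ⊆ R' → ∃ h ∈ δ.2, h ⊆ R')) ↔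
    ((∀ δ ∈ Δ, δ.1 ⊆ D' → ∃ h ∈ δ.2, h ⊆ D') ∧
      ∀ α ∈ D \ D',
        ¬ (∀ δ ∈ Δ, δ.1 ⊆ insert α D' → ∃ h ∈ δ.2, h ⊆ insert α D')) := by
  constructor
  · rintro ⟨hc, hmax⟩
    refine ⟨hc, fun α hα => ?_⟩
    simp only [Finset.mem_sdiff] at hα
    exact hmax (insert α D') (Finset.ssubset_insert hα.2) (Finset.insert_subset hα.1 hD')
  · rintro ⟨hc, hone⟩
    refine ⟨hc, fun R' hss hRD hcons => ?_⟩
    obtain ⟨α, hαmem, hαmin⟩ := Finset.exists_min_image (R' \ D') lvl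
      (Finset.sdiff_nonempty.mpr hss.not_subset)
    simp only [Finset.mem_sdiff] at hαmem
    apply hone α (Finset.mem_sdiff.mpr ⟨hRD hαmem.1, hαmem.2⟩)
    intro δ hδ hB
    by_cases hBD : δ.1 ⊆ D'
    · obtain ⟨h, hh, hhD⟩ := hc δ hδ hBD
      exact ⟨h, hh, hhD.trans (Finset.subset_insert _ _)⟩
    · have hαB : α ∈ δ.1 := by
        by_contra hα
        exact hBD fun b hb => (Finset.mem_insert.mp (hB hb)).resolve_left
          (fun e => hα (e ▸ hb))
      have hBR : δ.1 ⊆ R' := fun b hb =>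
        (Finset.mem_insert.mp (hB hb)).elim (fun e => e ▸ hαmem.1)
          (fun h => hss.subset h)
      obtain ⟨h, hh, hhR⟩ := hcons δ hδ hBR
      refine ⟨h, hh, fun x hx => ?_⟩
      have hlx : lvl x < lvl α := hacyc δ hδ α hαB h hh x hx
      by_cases hxD : x ∈ D'
      · exact Finset.mem_insert_of_mem hxD
      · exact absurd (hαmin x (Finset.mem_sdiff.mpr ⟨hhR hx, hxD⟩)) (not_le.mpr hlx)
end

section
/- A query Q fails to be entailed by all repairs of a finite database D if and only if there exists a subset D' of D such that D' is consistent, Q does not hold in D', and for every α ∈ D \ D' the set D' ∪ {α} is not weakly consistent with D. -/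
theorem not_allRep_entailed_iff {F : Type*} [DecidableEq F]
    (D : Finset F) (C : Finset F → Prop) (hC : C ∅) (Q : Finset F → Prop) :
    (¬ ∀ R : Finset F,
        (R ⊆ D ∧ C R ∧ ∀ R' : Finset F, R ⊂ R' → R' ⊆ D → ¬ C R') → Q R) ↔
      (∃ D' : Finset F, D' ⊆ D ∧ C D' ∧ ¬ Q D' ∧
        ∀ α ∈ D \ D',
          ¬ ∃ D'' : Finset F, insert α D' ⊆ D'' ∧ D'' ⊆ D ∧ C D'') := by
  constructor
  · intro h
    push_neg at h
    obtain ⟨R, ⟨hRD, hCR, hmax⟩, hQ⟩ := h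
    refine ⟨R, hRD, hCR, hQ, ?_⟩
    rintro α hα ⟨D'', h1, h2, h3⟩
    rw [Finset.mem_sdiff] at hα
    have hss : R ⊂ D'' := by
      refine Finset.ssubset_iff_of_subset
        ((Finset.subset_insert α R).trans h1) |>.mpr ?_
      exact ⟨α, h1 (Finset.mem_insert_self α R), hα.2⟩
    exact hmax D'' hss h2 h3
  · rintro ⟨D', hD, hC', hQ, hmax⟩ h
    apply hQ
    apply h D'
    refine ⟨hD, hC', ?_⟩
    intro R' hss hRD hCR'
    obtain ⟨α, hαR', hαD'⟩ := Finset.exists_of_ssubset hss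
    exact hmax α (Finset.mem_sdiff.mpr ⟨hRD hαR', hαD'⟩)
      ⟨R', Finset.insert_subset hαR' hss.subset, hRD, hCR'⟩
end

section
/- Let a Boolean query Q be given by a set 𝓜 of images (finite subsets of D), with a set S satisfying Q iff some M ∈ 𝓜 has ↑M ⊆ S. Then Q holds in the intersection of all repairs of D if and only if there exists an image M ∈ 𝓜 such that for every weakly consistent subset D' of D, the set D' ∪ M is weakly consistent with D. -/
def IsRepair {F : Type*} (D : Finset F) (C : Finset F → Prop) (R : Finset F) : Prop :=
  R ⊆ D ∧ C R ∧ ∀ R' : Finset F, R ⊂ R' → R' ⊆ D → ¬ C R'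

theorem exists_repair_superset {F : Type*} {D : Finset F} {C : Finset F → Prop}
    {T : Finset F} (hTD : T ⊆ D) (hCT : C T) : ∃ R, T ⊆ R ∧ IsRepair D C R := by
  have hfin : {S : Finset F | S ⊆ D ∧ C S}.Finite :=
    D.powerset.finite_toSet.subset fun S hS => Finset.mem_powerset.mpr hS.1
  obtain ⟨R, hTR, ⟨hRD, hCR⟩, hmax⟩ := hfin.exists_le_maximal ⟨hTD, hCT⟩
  exact ⟨R, hTR, hRD, hCR, fun R' hRR' hR'D hCR' =>
    hRR'.not_subset (hmax ⟨hR'D, hCR'⟩ hRR'.subset)⟩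

theorem IsRepair.subset_of_union_subset {F : Type*} [DecidableEq F] {D : Finset F}
    {C : Finset F → Prop} {R M T : Finset F} (hR : IsRepair D C R)
    (hRMT : R ∪ M ⊆ T) (hTD : T ⊆ D) (hCT : C T) : M ⊆ R := by
  have hRT : R = T := by
    by_contra hne
    exact hR.2.2 T (Finset.union_subset_left hRMT |>.ssubset_of_ne hne) hTD hCT
  exact hRT ▸ Finset.union_subset_right hRMT

theorem intRep_query_iff_general {F : Type*} [DecidableEq F]
    (D : Finset F) (C : Finset F → Prop)
    (Ms : Set (Finset F)) :
    (∃ M ∈ Ms, ∀ R : Finset F,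
        (R ⊆ D ∧ C R ∧ ∀ R' : Finset F, R ⊂ R' → R' ⊆ D → ¬ C R') → M ⊆ R) ↔
      (∃ M ∈ Ms, ∀ D' : Finset F, D' ⊆ D →
        (∃ D'' : Finset F, D' ⊆ D'' ∧ D'' ⊆ D ∧ C D'') →
        (∃ D'' : Finset F, D' ∪ M ⊆ D'' ∧ D'' ⊆ D ∧ C D'')) := by
  refine exists_congr fun M => and_congr_right fun _ => ⟨?_, ?_⟩
  · rintro hM D' - ⟨D'', hD'D'', hD''D, hCD''⟩
    obtain ⟨R, hD''R, hR⟩ := exists_repair_superset hD''D hCD''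
    exact ⟨R, Finset.union_subset (hD'D''.trans hD''R) (hM R hR), hR.1, hR.2.1⟩
  · intro hM R hR
    obtain ⟨T, hRMT, hTD, hCT⟩ := hM R hR.1 ⟨R, subset_rfl, hR.1, hR.2.1⟩
    exact IsRepair.subset_of_union_subset hR hRMT hTD hCT

theorem intRep_query_iff {F : Type*} [DecidableEq F]
    (D : Finset F) (C : Finset F → Prop) (hC : C ∅)
    (Ms : Set (Finset F)) (hMs : ∀ M ∈ Ms, M ⊆ D) :
    (∃ M ∈ Ms, ∀ R : Finset F,
        (R ⊆ D ∧ C R ∧ ∀ R' : Finset F, R ⊂ R' → R' ⊆ D → ¬ C R') → M ⊆ R) ↔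
      (∃ M ∈ Ms, ∀ D' : Finset F, D' ⊆ D →
        (∃ D'' : Finset F, D' ⊆ D'' ∧ D'' ⊆ D ∧ C D'') →
        (∃ D'' : Finset F, D' ∪ M ⊆ D'' ∧ D'' ⊆ D ∧ C D'')) :=
  intRep_query_iff_general D C Ms
end
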